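/- Let n ≥ 2 and let G_n be the primal graph of EQ'_n: its vertex set is {x_i, u_i, t_i : 1 ≤ i ≤ n} ∪ {e_i : 1 ≤ i ≤ n−1}, and its edges are, for each 1 ≤ i ≤ n, the three edges among {x_i, u_i, t_i}, together with the edge {t_1, e_1}, the edges {e_{i−1}, t_i}, {e_{i−1}, e_i}, {t_i, e_i} for 2 ≤ i ≤ n−1, and the edge {e_{n−1}, t_n}. Then G_n has a path decomposition of width at most 4, i.e., a path decomposition in which every bag has at most 5 vertices. -/
import Mathlib


/-- The variables of `EQ'_n`: `x_1, …, x_n`, `u_1, …, u_n`, `t_1, …, t_n` (0-indexed as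
`x ⟨i-1⟩` etc.) and `e_1, …, e_{n-1}` (0-indexed as `e ⟨i-1⟩`). -/
inductive EqVar (n : ℕ) where
  | x : Fin n → EqVar n
  | u : Fin n → EqVar n
  | t : Fin n → EqVar n
  | e : Fin (n - 1) → EqVar n
deriving DecidableEq

/-- The edge relation of the primal graph of `EQ'_n` (to be symmetrized): for each
`1 ≤ i ≤ n` the three edges among `{x_i, u_i, t_i}`, together with `{t_1, e_1}`, the
edges `{e_{i−1}, t_i}`, `{e_{i−1}, e_i}`, `{t_i, e_i}` for `2 ≤ i ≤ n−1`, and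
`{e_{n−1}, t_n}`. -/
def eqEdge (n : ℕ) (v w : EqVar n) : Prop :=
  (∃ i : Fin n, (v = .x i ∨ v = .u i ∨ v = .t i) ∧ (w = .x i ∨ w = .u i ∨ w = .t i)) ∨
  (∃ _h : 1 ≤ n - 1, v = .t ⟨0, by omega⟩ ∧ w = .e ⟨0, by omega⟩) ∨
  (∃ j : ℕ, ∃ _hj1 : 1 ≤ j, ∃ _hj2 : j < n - 1,
    (v = .e ⟨j - 1, by omega⟩ ∧ w = .t ⟨j, by omega⟩) ∨
    (v = .e ⟨j - 1, by omega⟩ ∧ w = .e ⟨j, by omega⟩) ∨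
    (v = .t ⟨j, by omega⟩ ∧ w = .e ⟨j, by omega⟩)) ∨
  (∃ _h : 1 ≤ n - 1, v = .e ⟨n - 2, by omega⟩ ∧ w = .t ⟨n - 1, by omega⟩)

/-- The primal graph `G_n` of `EQ'_n`. -/
def eqGraph (n : ℕ) : SimpleGraph (EqVar n) := SimpleGraph.fromRel (eqEdge n)

def eqBags (n : ℕ) (j : Fin n) : Finset (EqVar n) :=
  ({EqVar.x j, EqVar.u j, EqVar.t j} : Finset (EqVar n))
  ∪ (if _h : 1 ≤ (j : ℕ) then {EqVar.e ⟨(j : ℕ) - 1, by have := j.isLt; omega⟩} else ∅)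
  ∪ (if h : (j : ℕ) < n - 1 then {EqVar.e ⟨(j : ℕ), h⟩} else ∅)

lemma mem_eqBags_x (n : ℕ) (i : Fin n) (j : Fin n) :
    EqVar.x i ∈ eqBags n j ↔ j = i := by
  unfold eqBags
  split_ifs <;> simp [Fin.ext_iff, eq_comm]

lemma mem_eqBags_u (n : ℕ) (i : Fin n) (j : Fin n) :
    EqVar.u i ∈ eqBags n j ↔ j = i := by
  unfold eqBags
  split_ifs <;> simp [Fin.ext_iff, eq_comm]

lemma mem_eqBags_t (n : ℕ) (i : Fin n) (j : Fin n) :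
    EqVar.t i ∈ eqBags n j ↔ j = i := by
  unfold eqBags
  split_ifs <;> simp [Fin.ext_iff, eq_comm]

lemma mem_eqBags_e (n : ℕ) (i : Fin (n - 1)) (j : Fin n) :
    EqVar.e i ∈ eqBags n j ↔ ((j : ℕ) = i ∨ (j : ℕ) = i + 1) := by
  unfold eqBags
  have hi := i.isLt
  split_ifs <;> simp [Fin.ext_iff] <;> omega

lemma eqEdge_covered (n : ℕ) (hn : 2 ≤ n) (v w : EqVar n) (h : eqEdge n v w) :
    ∃ j, v ∈ eqBags n j ∧ w ∈ eqBags n j := by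
  rcases h with ⟨i, hv, hw⟩ | ⟨h1, hv, hw⟩ | ⟨j, hj1, hj2, hc⟩ | ⟨h1, hv, hw⟩
  · rcases hv with rfl | rfl | rfl <;> rcases hw with rfl | rfl | rfl <;>
      exact ⟨i, by simp [mem_eqBags_x, mem_eqBags_u, mem_eqBags_t],
        by simp [mem_eqBags_x, mem_eqBags_u, mem_eqBags_t]⟩
  · subst hv; subst hw
    exact ⟨⟨0, by omega⟩, by simp [mem_eqBags_t], by simp [mem_eqBags_e]⟩
  · refine ⟨⟨j, by omega⟩, ?_⟩
    rcases hc with ⟨rfl, rfl⟩ | ⟨rfl, rfl⟩ | ⟨rfl, rfl⟩ <;>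
      refine ⟨?_, ?_⟩ <;> simp [mem_eqBags_t, mem_eqBags_e] <;> omega
  · subst hv; subst hw
    exact ⟨⟨n - 1, by omega⟩, by simp [mem_eqBags_e]; omega, by simp [mem_eqBags_t]⟩

/-- The primal graph of `EQ'_n` has a path decomposition of width at most `4`, i.e. a
path decomposition all of whose bags have at most `5` vertices. -/
theorem eqGraph_pathwidth_le_four (n : ℕ) (hn : 2 ≤ n) :
    ∃ (m : ℕ) (B : Fin m → Finset (EqVar n)),
      (∀ v, ∃ j, v ∈ B j) ∧
      (∀ v w, (eqGraph n).Adj v w → ∃ j, v ∈ B j ∧ w ∈ B j) ∧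
      (∀ v (j k l : Fin m), j ≤ k → k ≤ l → v ∈ B j → v ∈ B l → v ∈ B k) ∧
      (∀ j, (B j).card ≤ 5) := by
  refine ⟨n, eqBags n, ?_, ?_, ?_, ?_⟩
  · rintro (i | i | i | i)
    · exact ⟨i, by simp [mem_eqBags_x]⟩
    · exact ⟨i, by simp [mem_eqBags_u]⟩
    · exact ⟨i, by simp [mem_eqBags_t]⟩
    · exact ⟨⟨i, by have := i.isLt; omega⟩, by simp [mem_eqBags_e]⟩
  · intro v w hadj
    rcases hadj with ⟨hne, h | h⟩
    · exact eqEdge_covered n hn v w h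
    · obtain ⟨j, h1, h2⟩ := eqEdge_covered n hn w v h
      exact ⟨j, h2, h1⟩
  · rintro (i | i | i | i) j k l hjk hkl hj hl <;>
      simp only [mem_eqBags_x, mem_eqBags_u, mem_eqBags_t, mem_eqBags_e] at * <;>
      [skip; skip; skip; skip] <;>
      first
        | (subst hj; exact le_antisymm hkl hjk)
        | (rw [Fin.le_def] at hjk hkl; omega)
  · intro j
    unfold eqBags
    refine le_trans (Finset.card_union_le _ _) ?_
    refine le_trans (Nat.add_le_add_right (Finset.card_union_le _ _) _) ?_
    have h1 : ({EqVar.x j, EqVar.u j, EqVar.t j} : Finset (EqVar n)).card ≤ 3 := by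
      refine (Finset.card_insert_le _ _).trans (Nat.succ_le_succ ?_)
      refine (Finset.card_insert_le _ _).trans (Nat.succ_le_succ ?_)
      simp
    have h2 : (if _h : 1 ≤ (j : ℕ) then
        ({EqVar.e ⟨(j : ℕ) - 1, by have := j.isLt; omega⟩} : Finset (EqVar n)) else ∅).card ≤ 1 := by
      split_ifs <;> simp
    have h3 : (if h : (j : ℕ) < n - 1 then
        ({EqVar.e ⟨(j : ℕ), h⟩} : Finset (EqVar n)) else ∅).card ≤ 1 := by
      split_ifs <;> simp
    omega
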